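/- For every k ≥ 2, MEMB_k is hard for kSDA under logarithmic-space many-one reductions, and hence hard for LOGkSDA: every language L ∈ kSDA satisfies L ≤^L_m MEMB_k. -/

import Mathlib

/-!
Formalization infrastructure for depth-`k` storage automata (k-sda's),
following T. Yamakami, "Between SC and LOGDCFL: Families of Languages
Accepted by Logarithmic-Space Deterministic Auxiliary Depth-k Storage
Automata".
-/

namespace SDAP

/-- Head directions. -/
inductive Dir | left | stay | right
deriving DecidableEq

/-- Input-tape symbols: the two endmarkers `▷`, `◁` or a genuine symbol. -/
inductive InSym (α : Type) | lend | rend | sym (a : α)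

/-- Move a head position on a semi-infinite tape (clamped at `0`). -/
def moveNat (p : ℕ) : Dir → ℕ
  | Dir.left => p - 1
  | Dir.stay => p
  | Dir.right => p + 1

/-- Move the input head, clamped to the segment `[0, n+1]` holding `▷ x ◁`. -/
def moveIn (n p : ℕ) (d : Dir) : ℕ := min (moveNat p d) (n + 1)

/-- Symbol at position `i` of the input tape holding `▷ x ◁`. -/
def inAt {α : Type} (x : List α) (i : ℕ) : InSym α :=
  if i = 0 then InSym.lend
  else if h : i - 1 < x.length then InSym.sym (x.get ⟨i - 1, h⟩)
  else InSym.rend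

/-! ### One-way deterministic depth-`k` storage automata (k-sda's) -/

/-- Output of one transition of a k-sda. -/
structure SDAOut (Q G : ℕ) where
  st : Fin Q
  wr : Fin G
  dIn : Dir
  dSt : Dir

/-- A one-way deterministic depth-`k` storage automaton: a read-once input
tape and a depth-`k` storage tape with storage alphabet `Fin G` graded by
the depth function `dv`. -/
structure SDA (k : ℕ) (α : Type) where
  Q : ℕ
  G : ℕ
  dv : Fin G → ℕ
  box : Fin G      -- the initial blank `□`, depth 0
  blank : Fin G    -- the frozen blank `B`, depth k
  lend : Fin G     -- the left endmarker `▷` of the storage tape, depth k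
  q0 : Fin Q
  qacc : Finset (Fin Q)
  qrej : Finset (Fin Q)
  δ : Fin Q → InSym α → Fin G → SDAOut Q G

namespace SDA

variable {k : ℕ} {α : Type}

structure Cfg (M : SDA k α) where
  st : Fin M.Q
  ip : ℕ
  sp : ℕ
  tape : ℕ → Fin M.G

def init (M : SDA k α) : M.Cfg :=
  ⟨M.q0, 0, 0, fun i => if i = 0 then M.lend else M.box⟩

def Halted (M : SDA k α) (c : M.Cfg) : Prop := c.st ∈ M.qacc ∨ c.st ∈ M.qrej

def step (M : SDA k α) (x : List α) (c : M.Cfg) : M.Cfg :=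
  if c.st ∈ M.qacc ∨ c.st ∈ M.qrej then c
  else
    let t := M.δ c.st (inAt x c.ip) (c.tape c.sp)
    ⟨t.st, moveIn x.length c.ip t.dIn, moveNat c.sp t.dSt,
      Function.update c.tape c.sp t.wr⟩

def run (M : SDA k α) (x : List α) (t : ℕ) : M.Cfg := (M.step x)^[t] M.init

def Accepts (M : SDA k α) (x : List α) : Prop := ∃ t, (M.run x t).st ∈ M.qacc

def Rejects (M : SDA k α) (x : List α) : Prop := ∃ t, (M.run x t).st ∈ M.qrej

def Halts (M : SDA k α) (x : List α) : Prop := ∃ t, M.Halted (M.run x t)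

def Recognizes (M : SDA k α) (L : Language α) : Prop :=
  ∀ x, (x ∈ L ↔ M.Accepts x) ∧ (x ∉ L ↔ M.Rejects x)

def lang (M : SDA k α) : Language α := {x | M.Accepts x}

/-- `M` halts within polynomial time on every input. -/
def PolyTime (M : SDA k α) : Prop :=
  ∃ c : ℕ, ∀ x : List α, ∃ t ≤ c * x.length ^ c + c, M.Halted (M.run x t)

/-- Structural well-formedness: graded storage alphabet, read-once
(one-way) input head, and the depth-`k` requirement on the storage tape
(passing through a symbol of depth `e < k` raises its depth by `1`, and
by `2` at a turn, capped at `k`; depth-`k` symbols are frozen). Because the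
depth alphabets are mutually disjoint, the direction from which the head
arrived is encoded in the parity of the depth. -/
def WellFormed (M : SDA k α) : Prop :=
  (∀ s, M.dv s ≤ k) ∧ M.dv M.box = 0 ∧ M.dv M.blank = k ∧ M.dv M.lend = k ∧
  M.blank ≠ M.lend ∧
  ∀ q σ γ,
    ((M.δ q σ γ).dIn ≠ Dir.left) ∧
    ((M.δ q σ γ).wr = M.lend ↔ γ = M.lend) ∧
    (γ = M.lend → (M.δ q σ γ).dSt ≠ Dir.left) ∧
    (M.dv γ = k → (M.δ q σ γ).wr = γ) ∧
    ((M.δ q σ γ).dSt = Dir.stay → (M.δ q σ γ).wr = γ) ∧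
    (M.dv γ < k → (M.δ q σ γ).dSt = Dir.right →
      M.dv (M.δ q σ γ).wr = min (M.dv γ + if Even (M.dv γ) then 1 else 2) k) ∧
    (M.dv γ < k → (M.δ q σ γ).dSt = Dir.left →
      M.dv (M.δ q σ γ).wr = min (M.dv γ + if Even (M.dv γ) then 2 else 1) k) ∧
    (M.dv (M.δ q σ γ).wr = k → (M.δ q σ γ).wr = M.lend ∨ (M.δ q σ γ).wr = M.blank)

/-- Depth-susceptibility: while scanning a storage symbol of depth
`≥ k-1` the input head is stationary, and while scanning the frozen
blank the inner state does not change. -/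
def DepthSusceptible (M : SDA k α) : Prop :=
  ∀ q σ γ,
    (k - 1 ≤ M.dv γ → (M.δ q σ γ).dIn = Dir.stay) ∧
    (γ = M.blank → (M.δ q σ γ).st = q)

end SDA

/-- The family `kSDA` of languages recognized by depth-susceptible k-sda's. -/
def kSDA (k : ℕ) (α : Type) : Set (Language α) :=
  {L | ∃ M : SDA k α, M.WellFormed ∧ M.DepthSusceptible ∧ M.Recognizes L}

/-- The family `kSDA_imm` of languages recognized by polynomial-time
depth-immune k-sda's (no behavioral restriction at high-depth symbols). -/
def kSDAimm (k : ℕ) (α : Type) : Set (Language α) :=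
  {L | ∃ M : SDA k α, M.WellFormed ∧ M.PolyTime ∧ M.Recognizes L}

/-! ### One-way deterministic pushdown automata and DCFL -/

/-- A deterministic pushdown automaton (acceptance by final state with the
whole input consumed). `δε` gives ε-moves, `δ` gives reading moves; on a
transition the top stack symbol is replaced by a string. -/
structure DPDA (α : Type) where
  Q : ℕ
  G : ℕ
  q0 : Fin Q
  Z0 : Fin G
  qacc : Finset (Fin Q)
  δε : Fin Q → Fin G → Option (Fin Q × List (Fin G))
  δ : Fin Q → α → Fin G → Option (Fin Q × List (Fin G))

namespace DPDA

variable {α : Type}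

structure Cfg (P : DPDA α) where
  st : Fin P.Q
  input : List α
  stack : List (Fin P.G)

def init (P : DPDA α) (x : List α) : P.Cfg := ⟨P.q0, x, [P.Z0]⟩

def step (P : DPDA α) (c : P.Cfg) : P.Cfg :=
  match c.stack with
  | [] => c
  | Z :: ζ =>
    match P.δε c.st Z with
    | some (p, γ) => ⟨p, c.input, γ ++ ζ⟩
    | none =>
      match c.input with
      | [] => c
      | a :: w =>
        match P.δ c.st a Z with
        | some (p, γ) => ⟨p, w, γ ++ ζ⟩
        | none => c

/-- Determinism: an ε-move and a reading move are never both available. -/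
def Deterministic (P : DPDA α) : Prop :=
  ∀ q Z, (P.δε q Z).isSome → ∀ a, P.δ q a Z = none

def Accepts (P : DPDA α) (x : List α) : Prop :=
  ∃ t, (P.step^[t] (P.init x)).input = [] ∧ (P.step^[t] (P.init x)).st ∈ P.qacc

end DPDA

/-- The deterministic context-free languages. -/
def DCFL (α : Type) : Set (Language α) :=
  {L | ∃ P : DPDA α, P.Deterministic ∧ ∀ x, x ∈ L ↔ P.Accepts x}

/-! ### Offline deterministic Turing machines; SC^k and P -/

structure TMOut (Q W : ℕ) where
  st : Fin Q
  wr : Fin W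
  dIn : Dir
  dW : Dir

/-- A deterministic Turing machine with a two-way read-only input tape and
one semi-infinite rewritable work tape. -/
structure OffTM (α : Type) where
  Q : ℕ
  W : ℕ
  q0 : Fin Q
  blank : Fin W
  qacc : Finset (Fin Q)
  qrej : Finset (Fin Q)
  δ : Fin Q → InSym α → Fin W → TMOut Q W

namespace OffTM

variable {α : Type}

structure Cfg (M : OffTM α) where
  st : Fin M.Q
  ip : ℕ
  wp : ℕ
  w : ℕ → Fin M.W

def init (M : OffTM α) : M.Cfg := ⟨M.q0, 0, 0, fun _ => M.blank⟩

def Halted (M : OffTM α) (c : M.Cfg) : Prop := c.st ∈ M.qacc ∨ c.st ∈ M.qrej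

def step (M : OffTM α) (x : List α) (c : M.Cfg) : M.Cfg :=
  if c.st ∈ M.qacc ∨ c.st ∈ M.qrej then c
  else
    let t := M.δ c.st (inAt x c.ip) (c.w c.wp)
    ⟨t.st, moveIn x.length c.ip t.dIn, moveNat c.wp t.dW,
      Function.update c.w c.wp t.wr⟩

def run (M : OffTM α) (x : List α) (t : ℕ) : M.Cfg := (M.step x)^[t] M.init

def Accepts (M : OffTM α) (x : List α) : Prop := ∃ t, (M.run x t).st ∈ M.qacc

end OffTM

/-- Steve's class `SC^k`: languages decided by deterministic Turing machines
simultaneously in polynomial time and `O(log^k n)` space. -/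
def SCk (k : ℕ) (α : Type) : Set (Language α) :=
  {L | ∃ M : OffTM α, ∃ c : ℕ,
    (∀ x : List α, ∃ t ≤ c * x.length ^ c + c, M.Halted (M.run x t)) ∧
    (∀ x, x ∈ L ↔ M.Accepts x) ∧
    (∀ (x : List α) (t : ℕ), (M.run x t).wp + 1 ≤ c * (Nat.log 2 x.length) ^ k + c)}

/-- `SC = ⋃_{k ≥ 1} SC^k`. -/
def SC (α : Type) : Set (Language α) := {L | ∃ k, 1 ≤ k ∧ L ∈ SCk k α}

/-- Polynomial time. -/
def Pclass (α : Type) : Set (Language α) :=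
  {L | ∃ M : OffTM α, ∃ c : ℕ,
    (∀ x : List α, ∃ t ≤ c * x.length ^ c + c, M.Halted (M.run x t)) ∧
    (∀ x, x ∈ L ↔ M.Accepts x)}

/-! ### Function transducers; FL and logspace many-one reductions -/

structure TTMOut (Q W : ℕ) (β : Type) where
  st : Fin Q
  wr : Fin W
  dIn : Dir
  dW : Dir
  out : Option β

/-- A deterministic Turing machine computing a function: a two-way read-only
input tape, one work tape, and a write-once output tape. -/
structure TransTM (α β : Type) where
  Q : ℕ
  W : ℕ
  q0 : Fin Q
  blank : Fin W
  qhalt : Finset (Fin Q)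
  δ : Fin Q → InSym α → Fin W → TTMOut Q W β

namespace TransTM

variable {α β : Type}

structure Cfg (M : TransTM α β) where
  st : Fin M.Q
  ip : ℕ
  wp : ℕ
  w : ℕ → Fin M.W
  out : List β

def init (M : TransTM α β) : M.Cfg := ⟨M.q0, 0, 0, fun _ => M.blank, []⟩

def step (M : TransTM α β) (x : List α) (c : M.Cfg) : M.Cfg :=
  if c.st ∈ M.qhalt then c
  else
    let t := M.δ c.st (inAt x c.ip) (c.w c.wp)
    ⟨t.st, moveIn x.length c.ip t.dIn, moveNat c.wp t.dW,
      Function.update c.w c.wp t.wr, c.out ++ t.out.toList⟩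

def run (M : TransTM α β) (x : List α) (t : ℕ) : M.Cfg := (M.step x)^[t] M.init

def Computes (M : TransTM α β) (f : List α → List β) : Prop :=
  ∀ x, ∃ t, (M.run x t).st ∈ M.qhalt ∧ (M.run x t).out = f x

def PolyTime (M : TransTM α β) : Prop :=
  ∃ c : ℕ, ∀ x : List α, ∃ t ≤ c * x.length ^ c + c, (M.run x t).st ∈ M.qhalt

def LogSpace (M : TransTM α β) : Prop :=
  ∃ c : ℕ, ∀ (x : List α) (t : ℕ), (M.run x t).wp + 1 ≤ c * Nat.log 2 x.length + c

end TransTM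

/-- `FL`: functions computable in polynomial time and `O(log n)` space. -/
def InFL {α β : Type} (f : List α → List β) : Prop :=
  ∃ M : TransTM α β, M.Computes f ∧ M.PolyTime ∧ M.LogSpace

/-- Logarithmic-space many-one reducibility `≤^L_m`. -/
def LmRed {α β : Type} (L₁ : Language α) (L₂ : Language β) : Prop :=
  ∃ f : List α → List β, InFL f ∧ ∀ x, x ∈ L₁ ↔ f x ∈ L₂

/-- `LOGkSDA`: the closure of `kSDA` under `≤^L_m` (targets over a finite
alphabet, w.l.o.g. `Fin m`). -/
def LOGkSDA (k : ℕ) (α : Type) : Set (Language α) :=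
  {A | ∃ m : ℕ, ∃ B ∈ kSDA k (Fin m), LmRed A B}

/-- `LOGkSDA_imm`: the closure of `kSDA_imm` under `≤^L_m`. -/
def LOGkSDAimm (k : ℕ) (α : Type) : Set (Language α) :=
  {A | ∃ m : ℕ, ∃ B ∈ kSDAimm k (Fin m), LmRed A B}

/-- `LOGDCFL`: the closure of `DCFL` under `≤^L_m`. -/
def LOGDCFL (α : Type) : Set (Language α) :=
  {A | ∃ m : ℕ, ∃ B ∈ DCFL (Fin m), LmRed A B}

/-! ### Deterministic auxiliary depth-`k` storage automata -/

structure AuxOut (Q W G : ℕ) where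
  st : Fin Q
  wrW : Fin W
  wrG : Fin G
  dIn : Dir
  dW : Dir
  dSt : Dir

/-- A deterministic auxiliary depth-`k` storage automaton: a two-way
read-only input tape, a rewritable auxiliary work tape, and a depth-`k`
storage tape. -/
structure AuxSDA (k : ℕ) (α : Type) where
  Q : ℕ
  W : ℕ
  G : ℕ
  dv : Fin G → ℕ
  box : Fin G
  blank : Fin G
  lend : Fin G
  wblank : Fin W
  q0 : Fin Q
  qacc : Finset (Fin Q)
  qrej : Finset (Fin Q)
  δ : Fin Q → InSym α → Fin W → Fin G → AuxOut Q W G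

namespace AuxSDA

variable {k : ℕ} {α : Type}

structure Cfg (M : AuxSDA k α) where
  st : Fin M.Q
  ip : ℕ
  wp : ℕ
  sp : ℕ
  w : ℕ → Fin M.W
  tape : ℕ → Fin M.G

def init (M : AuxSDA k α) : M.Cfg :=
  ⟨M.q0, 0, 0, 0, fun _ => M.wblank, fun i => if i = 0 then M.lend else M.box⟩

def Halted (M : AuxSDA k α) (c : M.Cfg) : Prop := c.st ∈ M.qacc ∨ c.st ∈ M.qrej

def step (M : AuxSDA k α) (x : List α) (c : M.Cfg) : M.Cfg :=
  if c.st ∈ M.qacc ∨ c.st ∈ M.qrej then c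
  else
    let t := M.δ c.st (inAt x c.ip) (c.w c.wp) (c.tape c.sp)
    ⟨t.st, moveIn x.length c.ip t.dIn, moveNat c.wp t.dW, moveNat c.sp t.dSt,
      Function.update c.w c.wp t.wrW, Function.update c.tape c.sp t.wrG⟩

def run (M : AuxSDA k α) (x : List α) (t : ℕ) : M.Cfg := (M.step x)^[t] M.init

def Accepts (M : AuxSDA k α) (x : List α) : Prop := ∃ t, (M.run x t).st ∈ M.qacc

def Rejects (M : AuxSDA k α) (x : List α) : Prop := ∃ t, (M.run x t).st ∈ M.qrej

def Recognizes (M : AuxSDA k α) (L : Language α) : Prop :=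
  ∀ x, (x ∈ L ↔ M.Accepts x) ∧ (x ∉ L ↔ M.Rejects x)

def PolyTime (M : AuxSDA k α) : Prop :=
  ∃ c : ℕ, ∀ x : List α, ∃ t ≤ c * x.length ^ c + c, M.Halted (M.run x t)

/-- The auxiliary work tape uses only `O(log n)` cells. -/
def LogSpace (M : AuxSDA k α) : Prop :=
  ∃ c : ℕ, ∀ (x : List α) (t : ℕ), (M.run x t).wp + 1 ≤ c * Nat.log 2 x.length + c

/-- Structural well-formedness: the depth-`k` requirement on the storage
tape and the stationary requirement. -/
def WellFormed (M : AuxSDA k α) : Prop :=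
  (∀ s, M.dv s ≤ k) ∧ M.dv M.box = 0 ∧ M.dv M.blank = k ∧ M.dv M.lend = k ∧
  M.blank ≠ M.lend ∧
  ∀ q σ τ γ,
    ((M.δ q σ τ γ).wrG = M.lend ↔ γ = M.lend) ∧
    (γ = M.lend → (M.δ q σ τ γ).dSt ≠ Dir.left) ∧
    (M.dv γ = k → (M.δ q σ τ γ).wrG = γ) ∧
    ((M.δ q σ τ γ).dSt = Dir.stay → (M.δ q σ τ γ).wrG = γ) ∧
    ((M.δ q σ τ γ).dW = Dir.stay → (M.δ q σ τ γ).wrW = τ) ∧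
    (M.dv γ < k → (M.δ q σ τ γ).dSt = Dir.right →
      M.dv (M.δ q σ τ γ).wrG = min (M.dv γ + if Even (M.dv γ) then 1 else 2) k) ∧
    (M.dv γ < k → (M.δ q σ τ γ).dSt = Dir.left →
      M.dv (M.δ q σ τ γ).wrG = min (M.dv γ + if Even (M.dv γ) then 2 else 1) k) ∧
    (M.dv (M.δ q σ τ γ).wrG = k →
      (M.δ q σ τ γ).wrG = M.lend ∨ (M.δ q σ τ γ).wrG = M.blank)

/-- Depth-susceptibility for auxiliary machines: while scanning a storage
symbol of depth `≥ k-1`, both the input head and the auxiliary head are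
stationary; while scanning the frozen blank, the inner state is unchanged. -/
def DepthSusceptible (M : AuxSDA k α) : Prop :=
  ∀ q σ τ γ,
    (k - 1 ≤ M.dv γ → (M.δ q σ τ γ).dIn = Dir.stay ∧ (M.δ q σ τ γ).dW = Dir.stay) ∧
    (γ = M.blank → (M.δ q σ τ γ).st = q)

end AuxSDA

/-! ### Two-way multi-head deterministic depth-`k` storage automata -/

structure MOut (Q G ℓ : ℕ) where
  st : Fin Q
  wr : Fin G
  dIn : Fin ℓ → Dir
  dSt : Dir

/-- A two-way `ℓ`-head deterministic depth-`k` storage automaton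
(`k`-sda₂(ℓ)): `ℓ` two-way read-only input heads and one depth-`k`
storage tape. -/
structure MSDA (k ℓ : ℕ) (α : Type) where
  Q : ℕ
  G : ℕ
  dv : Fin G → ℕ
  box : Fin G
  blank : Fin G
  lend : Fin G
  q0 : Fin Q
  qacc : Finset (Fin Q)
  qrej : Finset (Fin Q)
  δ : Fin Q → (Fin ℓ → InSym α) → Fin G → MOut Q G ℓ

namespace MSDA

variable {k ℓ : ℕ} {α : Type}

structure Cfg (M : MSDA k ℓ α) where
  st : Fin M.Q
  ips : Fin ℓ → ℕ
  sp : ℕ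
  tape : ℕ → Fin M.G

def init (M : MSDA k ℓ α) : M.Cfg :=
  ⟨M.q0, fun _ => 0, 0, fun i => if i = 0 then M.lend else M.box⟩

def Halted (M : MSDA k ℓ α) (c : M.Cfg) : Prop := c.st ∈ M.qacc ∨ c.st ∈ M.qrej

def step (M : MSDA k ℓ α) (x : List α) (c : M.Cfg) : M.Cfg :=
  if c.st ∈ M.qacc ∨ c.st ∈ M.qrej then c
  else
    let t := M.δ c.st (fun i => inAt x (c.ips i)) (c.tape c.sp)
    ⟨t.st, fun i => moveIn x.length (c.ips i) (t.dIn i), moveNat c.sp t.dSt,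
      Function.update c.tape c.sp t.wr⟩

def run (M : MSDA k ℓ α) (x : List α) (t : ℕ) : M.Cfg := (M.step x)^[t] M.init

def Accepts (M : MSDA k ℓ α) (x : List α) : Prop := ∃ t, (M.run x t).st ∈ M.qacc

def Rejects (M : MSDA k ℓ α) (x : List α) : Prop := ∃ t, (M.run x t).st ∈ M.qrej

def Halts (M : MSDA k ℓ α) (x : List α) : Prop := ∃ t, M.Halted (M.run x t)

def Recognizes (M : MSDA k ℓ α) (L : Language α) : Prop :=
  ∀ x, (x ∈ L ↔ M.Accepts x) ∧ (x ∉ L ↔ M.Rejects x)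

def PolyTime (M : MSDA k ℓ α) : Prop :=
  ∃ c : ℕ, ∀ x : List α, ∃ t ≤ c * x.length ^ c + c, M.Halted (M.run x t)

def WellFormed (M : MSDA k ℓ α) : Prop :=
  (∀ s, M.dv s ≤ k) ∧ M.dv M.box = 0 ∧ M.dv M.blank = k ∧ M.dv M.lend = k ∧
  M.blank ≠ M.lend ∧
  ∀ q σ γ,
    ((M.δ q σ γ).wr = M.lend ↔ γ = M.lend) ∧
    (γ = M.lend → (M.δ q σ γ).dSt ≠ Dir.left) ∧
    (M.dv γ = k → (M.δ q σ γ).wr = γ) ∧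
    ((M.δ q σ γ).dSt = Dir.stay → (M.δ q σ γ).wr = γ) ∧
    (M.dv γ < k → (M.δ q σ γ).dSt = Dir.right →
      M.dv (M.δ q σ γ).wr = min (M.dv γ + if Even (M.dv γ) then 1 else 2) k) ∧
    (M.dv γ < k → (M.δ q σ γ).dSt = Dir.left →
      M.dv (M.δ q σ γ).wr = min (M.dv γ + if Even (M.dv γ) then 2 else 1) k) ∧
    (M.dv (M.δ q σ γ).wr = k → (M.δ q σ γ).wr = M.lend ∨ (M.δ q σ γ).wr = M.blank)

/-- Depth-susceptibility: all input heads are stationary while the storage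
head scans a symbol of depth `≥ k-1`, and the state is unchanged while
scanning the frozen blank. -/
def DepthSusceptible (M : MSDA k ℓ α) : Prop :=
  ∀ q σ γ,
    (k - 1 ≤ M.dv γ → ∀ i, (M.δ q σ γ).dIn i = Dir.stay) ∧
    (γ = M.blank → (M.δ q σ γ).st = q)

/-- Head `h` is a counter head: the transition function ignores the symbol
it scans, and the storage-tape head stays still whenever head `h` moves. -/
def CounterHead (M : MSDA k ℓ α) (h : Fin ℓ) : Prop :=
  (∀ q σ σ' γ, (∀ i, i ≠ h → σ i = σ' i) → M.δ q σ γ = M.δ q σ' γ) ∧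
  (∀ q σ γ, (M.δ q σ γ).dIn h ≠ Dir.stay → (M.δ q σ γ).dSt = Dir.stay)

/-- Head `h` never moves to the left. -/
def OneWayHead (M : MSDA k ℓ α) (h : Fin ℓ) : Prop :=
  ∀ q σ γ, (M.δ q σ γ).dIn h ≠ Dir.left

end MSDA

/-- `kSDA₂(ℓ)`: languages recognized in polynomial time by depth-immune
two-way `ℓ`-head deterministic depth-`k` storage automata. -/
def kSDA2 (k ℓ : ℕ) (α : Type) : Set (Language α) :=
  {L | ∃ M : MSDA k ℓ α, M.WellFormed ∧ M.PolyTime ∧ M.Recognizes L}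

/-! ### Hibbard's deterministic k-limited automata -/

structure LDAOut (Q G : ℕ) where
  st : Fin Q
  wr : Fin G
  d : Dir

/-- A deterministic `k`-limited automaton: a single-tape two-way machine
whose tape initially holds `▷ x ◁`; each cell may be rewritten only during
its first `k` visits (a turn counts twice), tracked by the graded tape
alphabet. -/
structure LDA (k : ℕ) (α : Type) where
  Q : ℕ
  G : ℕ
  dv : Fin G → ℕ
  embed : α → Fin G     -- input symbols, of depth 0
  lend : Fin G          -- `▷`, frozen
  rend : Fin G          -- `◁`, frozen
  q0 : Fin Q
  qacc : Finset (Fin Q)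
  qrej : Finset (Fin Q)
  δ : Fin Q → Fin G → LDAOut Q G

namespace LDA

variable {k : ℕ} {α : Type}

structure Cfg (M : LDA k α) where
  st : Fin M.Q
  p : ℕ
  tape : ℕ → Fin M.G

def init (M : LDA k α) (x : List α) : M.Cfg :=
  ⟨M.q0, 0, fun i =>
    if i = 0 then M.lend
    else if h : i - 1 < x.length then M.embed (x.get ⟨i - 1, h⟩)
    else M.rend⟩

def Halted (M : LDA k α) (c : M.Cfg) : Prop := c.st ∈ M.qacc ∨ c.st ∈ M.qrej

def step (M : LDA k α) (c : M.Cfg) : M.Cfg :=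
  if c.st ∈ M.qacc ∨ c.st ∈ M.qrej then c
  else
    let t := M.δ c.st (c.tape c.p)
    ⟨t.st, moveNat c.p t.d, Function.update c.tape c.p t.wr⟩

def run (M : LDA k α) (x : List α) (t : ℕ) : M.Cfg := M.step^[t] (M.init x)

def Accepts (M : LDA k α) (x : List α) : Prop := ∃ t, (M.run x t).st ∈ M.qacc

def Rejects (M : LDA k α) (x : List α) : Prop := ∃ t, (M.run x t).st ∈ M.qrej

def Recognizes (M : LDA k α) (L : Language α) : Prop :=
  ∀ x, (x ∈ L ↔ M.Accepts x) ∧ (x ∉ L ↔ M.Rejects x)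

def WellFormed (M : LDA k α) : Prop :=
  (∀ s, M.dv s ≤ k) ∧ (∀ a, M.dv (M.embed a) = 0) ∧
  M.dv M.lend = k ∧ M.dv M.rend = k ∧ M.lend ≠ M.rend ∧
  ∀ q γ,
    ((M.δ q γ).wr = M.lend ↔ γ = M.lend) ∧
    ((M.δ q γ).wr = M.rend ↔ γ = M.rend) ∧
    (γ = M.lend → (M.δ q γ).d ≠ Dir.left) ∧
    (γ = M.rend → (M.δ q γ).d ≠ Dir.right) ∧
    (M.dv γ = k → (M.δ q γ).wr = γ) ∧
    ((M.δ q γ).d = Dir.stay → (M.δ q γ).wr = γ) ∧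
    (M.dv γ < k → (M.δ q γ).d = Dir.right →
      M.dv (M.δ q γ).wr = min (M.dv γ + if Even (M.dv γ) then 1 else 2) k) ∧
    (M.dv γ < k → (M.δ q γ).d = Dir.left →
      M.dv (M.δ q γ).wr = min (M.dv γ + if Even (M.dv γ) then 2 else 1) k)

end LDA

/-! ### Encodings of k-sda's and the membership problem MEMB_k -/

/-- An encoding scheme: a map sending every depth-susceptible k-sda over an
alphabet `Fin a` together with an input to a binary string. -/
def EncInjective {k : ℕ}
    (enc : (a : ℕ) → SDA k (Fin a) → List (Fin a) → List Bool) : Prop :=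
  Function.Injective
    (fun p : (a : ℕ) × (SDA k (Fin a) × List (Fin a)) => enc p.1 p.2.1 p.2.2)

/-- The membership problem `MEMB_k` relative to an encoding scheme. -/
def MEMB (k : ℕ)
    (enc : (a : ℕ) → SDA k (Fin a) → List (Fin a) → List Bool) : Language Bool :=
  {y | ∃ (a : ℕ) (M : SDA k (Fin a)) (x : List (Fin a)),
    M.WellFormed ∧ M.DepthSusceptible ∧ y = enc a M x ∧ M.Accepts x}

end SDAP

/-!
Encode `⟨M, x⟩` by the unary code of an index of `M` (there are only countably many
k-sda's over a finite alphabet) followed by the unary codes of the symbols of `x`. Unary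
codes form a prefix code, so the encoding is injective. If `L ≤^L_m B` via `f` and `M`
recognizes `B`, then `x ↦ ⟨M, f x⟩` is `f` followed by a string homomorphism behind a fixed
prefix. A transducer for `f` performs this post-processing by keeping the still pending
output word in its finite control, so the composite reduction is again in FL; taking `f`
to be the identity handles `kSDA`.
-/

namespace SDAP

instance : Finite Dir :=
  Finite.of_injective (fun d : Dir => match d with
    | .left => (0 : Fin 3) | .stay => 1 | .right => 2)
    (by intro a b h; cases a <;> cases b <;> simp_all)

instance {α : Type} [Finite α] : Finite (InSym α) :=
  Finite.of_injective (fun s : InSym α => match s with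
    | .lend => (none : Option (Option α)) | .rend => some none | .sym a => some (some a))
    (by intro a b h; cases a <;> cases b <;> simp_all)

instance {Q G : ℕ} : Finite (SDAOut Q G) :=
  Finite.of_injective (fun s : SDAOut Q G => (s.st, s.wr, s.dIn, s.dSt))
    (by rintro ⟨⟩ ⟨⟩ h; simp_all)

instance {k : ℕ} {α : Type} [Finite α] : Countable (SDA k α) := by
  refine Function.Injective.countable (f := fun M : SDA k α =>
    (⟨M.Q, M.G, (M.dv, M.box, M.blank, M.lend, M.q0, M.qacc, M.qrej, M.δ)⟩ :
      Σ Q G : ℕ, (Fin G → ℕ) × Fin G × Fin G × Fin G × Fin Q × Finset (Fin Q) ×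
        Finset (Fin Q) × (Fin Q → InSym α → Fin G → SDAOut Q G))) ?_
  rintro ⟨⟩ ⟨⟩ h
  obtain ⟨rfl, h⟩ := Sigma.mk.inj_iff.mp h
  obtain ⟨rfl, h⟩ := Sigma.mk.inj_iff.mp (eq_of_heq h)
  simp_all

def unaryCode (n : ℕ) : List Bool := List.replicate n true ++ [false]

theorem unaryCode_append_inj {n n' : ℕ} {X Y : List Bool} :
    unaryCode n ++ X = unaryCode n' ++ Y ↔ n = n' ∧ X = Y := by
  induction n generalizing n' with
  | zero => cases n' <;> simp [unaryCode, List.replicate_succ]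
  | succ n ih => cases n' <;> simp_all [unaryCode, List.replicate_succ]

theorem flatMap_unaryCode_injective :
    Function.Injective fun x : List ℕ => x.flatMap unaryCode := by
  intro x
  induction x with
  | nil => rintro (_ | ⟨n, y⟩) h <;> simp_all [unaryCode]
  | cons n x ih =>
    rintro (_ | ⟨n', y⟩) h
    · simp [unaryCode] at h
    · obtain ⟨rfl, hxy⟩ := unaryCode_append_inj.mp (by simpa using h)
      rw [ih hxy]

noncomputable def machineIndex (k : ℕ) : (Σ a : ℕ, SDA k (Fin a)) → ℕ :=
  (exists_injective_nat _).choose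

theorem machineIndex_injective (k : ℕ) : Function.Injective (machineIndex k) :=
  (exists_injective_nat _).choose_spec

noncomputable def encode (k a : ℕ) (M : SDA k (Fin a)) (x : List (Fin a)) : List Bool :=
  (machineIndex k ⟨a, M⟩ :: x.map Fin.val).flatMap unaryCode

theorem encode_injective (k : ℕ) : EncInjective (encode k) := by
  rintro ⟨a, M, x⟩ ⟨a', M', x'⟩ h
  obtain ⟨hM, hx⟩ := List.cons_eq_cons.mp (flatMap_unaryCode_injective h)
  obtain ⟨rfl, hM⟩ := Sigma.mk.inj_iff.mp (machineIndex_injective k hM)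
  obtain rfl := eq_of_heq hM
  obtain rfl := List.map_injective_iff.mpr Fin.val_injective hx
  rfl

theorem EncInjective.mem_MEMB_iff {k a : ℕ}
    {enc : (a : ℕ) → SDA k (Fin a) → List (Fin a) → List Bool} (henc : EncInjective enc)
    {M : SDA k (Fin a)} (hwf : M.WellFormed) (hds : M.DepthSusceptible) (x : List (Fin a)) :
    enc a M x ∈ MEMB k enc ↔ M.Accepts x := by
  refine ⟨fun ⟨a', M', x', _, _, h, hacc⟩ => ?_, fun h => ⟨a, M, x, hwf, hds, rfl, h⟩⟩
  cases henc (a₁ := ⟨a, M, x⟩) (a₂ := ⟨a', M', x'⟩) h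
  exact hacc

namespace TransTM

variable {α β γ : Type} (M : TransTM α β) (x : List α)

theorem run_zero : M.run x 0 = M.init := rfl

theorem run_succ (t : ℕ) : M.run x (t + 1) = M.step x (M.run x t) :=
  Function.iterate_succ_apply' _ _ _

theorem run_add (s t : ℕ) : M.run x (s + t) = (M.step x)^[t] (M.run x s) := by
  rw [run, run, Nat.add_comm, Function.iterate_add_apply]

theorem step_of_mem_qhalt {c : M.Cfg} (h : c.st ∈ M.qhalt) : M.step x c = c := if_pos h

theorem polyTime_of_le {A B c : ℕ}
    (hbound : ∀ x : List α,
      ∃ t ≤ A + B * (c * x.length ^ c + c), (M.run x t).st ∈ M.qhalt) :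
    M.PolyTime := by
  refine ⟨A + B * c + c, fun x => ?_⟩
  obtain ⟨t, ht, hh⟩ := hbound x
  refine ⟨t, ht.trans ?_, hh⟩
  have : B * c * x.length ^ c ≤ (A + B * c + c) * x.length ^ (A + B * c + c) := by
    rcases Nat.eq_zero_or_pos x.length with hn | hn
    · rcases Nat.eq_zero_or_pos c with rfl | hc
      · simp
      · simp [hn, Nat.zero_pow hc]
    · exact Nat.mul_le_mul (by omega) (Nat.pow_le_pow_right hn (by omega))
  nlinarith

theorem out_step_of_notMem_qhalt {c : M.Cfg} (hc : c.st ∉ M.qhalt) :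
    (M.step x c).out = c.out ++ (M.δ c.st (inAt x c.ip) (c.w c.wp)).out.toList := by
  rw [step, if_neg hc]

theorem ip_run_le (t : ℕ) : (M.run x t).ip ≤ x.length + 1 := by
  induction t with
  | zero => exact Nat.zero_le _
  | succ t ih =>
    rw [run_succ, step]
    split
    · exact ih
    · exact min_le_right _ _

def copy (α : Type) : TransTM α α where
  Q := 2
  W := 1
  q0 := 0
  blank := 0
  qhalt := {1}
  δ _ σ τ :=
    match σ with
    | .lend => ⟨0, τ, .right, .stay, none⟩
    | .sym b => ⟨0, τ, .right, .stay, some b⟩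
    | .rend => ⟨1, τ, .stay, .stay, none⟩

theorem q0_copy_notMem_qhalt : (copy α).q0 ∉ (copy α).qhalt :=
  show (0 : Fin 2) ∉ ({1} : Finset (Fin 2)) by decide

theorem run_copy {t : ℕ} (ht : t ≤ x.length + 1) :
    (copy α).run x t = ⟨(copy α).q0, t, 0, fun _ => (copy α).blank, x.take (t - 1)⟩ := by
  induction t with
  | zero => rfl
  | succ t ih =>
    rw [run_succ, ih (by omega), step, if_neg q0_copy_notMem_qhalt]
    rcases Nat.eq_zero_or_pos t with rfl | ht0
    · simp [copy, inAt, moveIn, moveNat]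
    · have hlt : t - 1 < x.length := by omega
      have hsym : inAt x t = .sym x[t - 1] := by simp [inAt, hlt, ht0.ne']
      simp [copy, hsym, moveIn, moveNat, ht]
      omega

theorem run_copy_length_add_two :
    ((copy α).run x (x.length + 2)).st ∈ (copy α).qhalt ∧
      ((copy α).run x (x.length + 2)).out = x := by
  have hrend : inAt x (x.length + 1) = .rend := by simp [inAt]
  rw [run_succ, run_copy x le_rfl, step, if_neg q0_copy_notMem_qhalt]
  simp only [copy, hrend, List.take_length, Nat.add_sub_cancel, Option.toList_none,
    List.append_nil, and_true]
  exact show (1 : Fin 2) ∈ ({1} : Finset (Fin 2)) by decide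

theorem run_wp_copy (t : ℕ) : ((copy α).run x t).wp = 0 := by
  induction t with
  | zero => rfl
  | succ t ih =>
    rw [run_succ, step]
    split
    · exact ih
    · cases inAt x ((copy α).run x t).ip <;> simpa [copy, moveNat]

section AppendFlatMap

variable {M} (h : β → List γ) (p : List γ)

def Pending : Set (List γ) := {w | w <:+ p ∨ ∃ b, w <:+ h b}

theorem pending_finite [Finite β] : (Pending h p).Finite := by
  refine (p.tails.finite_toSet.union
    (Set.finite_iUnion fun b => (h b).tails.finite_toSet)).subset ?_
  rintro w (hw | ⟨b, hw⟩)
  · exact Or.inl ((List.mem_tails _ _).mpr hw)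
  · exact Or.inr (Set.mem_iUnion.mpr ⟨b, (List.mem_tails _ _).mpr hw⟩)

instance [Finite β] : Finite (Pending h p) := (pending_finite h p).to_subtype

variable {h p}

theorem self_mem_pending : p ∈ Pending h p := Or.inl (List.suffix_refl p)

theorem nil_mem_pending : [] ∈ Pending h p := Or.inl List.nil_suffix

theorem mem_pending_of_cons_mem {c : γ} {w : List γ} (hw : c :: w ∈ Pending h p) :
    w ∈ Pending h p :=
  hw.imp (List.suffix_cons c w).trans fun ⟨b, hb⟩ => ⟨b, (List.suffix_cons c w).trans hb⟩

theorem flatMap_toList_mem_pending (o : Option β) : o.toList.flatMap h ∈ Pending h p := by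
  cases o with
  | none => exact nil_mem_pending
  | some b => exact Or.inr ⟨b, by simp⟩

variable (M h p) [Finite β]

abbrev AppendFlatMapState : Type := Fin M.Q × Pending h p

noncomputable def appendFlatMapEquiv :
    AppendFlatMapState M h p ≃ Fin (Nat.card (AppendFlatMapState M h p)) :=
  Finite.equivFin _

/-- The pending word is emitted one symbol per step before the simulation of `M` resumes;
the prefix `p` is the initial pending word. -/
noncomputable def appendFlatMap : TransTM α γ where
  Q := Nat.card (AppendFlatMapState M h p)
  W := M.W
  q0 := appendFlatMapEquiv M h p (M.q0, ⟨p, self_mem_pending⟩)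
  blank := M.blank
  qhalt := M.qhalt.image fun q => appendFlatMapEquiv M h p (q, ⟨[], nil_mem_pending⟩)
  δ s σ τ :=
    match (appendFlatMapEquiv M h p).symm s with
    | (q, ⟨c :: w, hw⟩) =>
      ⟨appendFlatMapEquiv M h p (q, ⟨w, mem_pending_of_cons_mem hw⟩), τ, .stay, .stay,
        some c⟩
    | (q, ⟨[], _⟩) =>
      let u := M.δ q σ τ
      ⟨appendFlatMapEquiv M h p
          (u.st, ⟨u.out.toList.flatMap h, flatMap_toList_mem_pending u.out⟩),
        u.wr, u.dIn, u.dW, none⟩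

variable {M h p}

noncomputable def liftCfg (c : M.Cfg) (w : Pending h p) (o : List γ) :
    (M.appendFlatMap h p).Cfg :=
  ⟨appendFlatMapEquiv M h p (c.st, w), c.ip, c.wp, c.w, o⟩

theorem liftCfg_mem_qhalt_iff (c : M.Cfg) (w : Pending h p) (o : List γ) :
    (liftCfg c w o).st ∈ (M.appendFlatMap h p).qhalt ↔ c.st ∈ M.qhalt ∧ w.1 = [] := by
  refine Finset.mem_image.trans ⟨fun ⟨q, hq, he⟩ => ?_, fun ⟨hc, hw⟩ =>
    ⟨c.st, hc, congrArg _ (Prod.ext rfl (Subtype.ext hw.symm))⟩⟩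
  obtain ⟨rfl, hw⟩ := Prod.ext_iff.mp ((appendFlatMapEquiv M h p).injective he)
  exact ⟨hq, (congrArg Subtype.val hw).symm⟩

theorem step_liftCfg_cons (c : M.Cfg) (hip : c.ip ≤ x.length + 1) {a : γ} {w : List γ}
    (hw : a :: w ∈ Pending h p) (o : List γ) :
    (M.appendFlatMap h p).step x (liftCfg c ⟨a :: w, hw⟩ o) =
      liftCfg c ⟨w, mem_pending_of_cons_mem hw⟩ (o ++ [a]) := by
  rw [step, if_neg (by simp [liftCfg_mem_qhalt_iff])]
  simp [appendFlatMap, liftCfg, moveIn, moveNat, hip]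

theorem step_liftCfg_nil (c : M.Cfg) (hc : c.st ∉ M.qhalt) (o : List γ) :
    (M.appendFlatMap h p).step x (liftCfg c ⟨[], nil_mem_pending⟩ o) =
      liftCfg (M.step x c)
        ⟨(M.δ c.st (inAt x c.ip) (c.w c.wp)).out.toList.flatMap h,
          flatMap_toList_mem_pending _⟩ o := by
  rw [step, if_neg (by simp [liftCfg_mem_qhalt_iff, hc]), TransTM.step, if_neg hc]
  simp [appendFlatMap, liftCfg]

theorem iterate_step_liftCfg (c : M.Cfg) (hip : c.ip ≤ x.length + 1) :
    ∀ (w : List γ) (hw : w ∈ Pending h p) (o : List γ),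
      ((M.appendFlatMap h p).step x)^[w.length] (liftCfg c ⟨w, hw⟩ o) =
        liftCfg c ⟨[], nil_mem_pending⟩ (o ++ w)
  | [], _, o => by simp
  | a :: w, hw, o => by
    rw [List.length_cons, Function.iterate_succ_apply, step_liftCfg_cons x c hip hw,
      iterate_step_liftCfg c hip w (mem_pending_of_cons_mem hw)]
    simp

theorem exists_run_appendFlatMap_eq {H : ℕ} (hH : ∀ b, (h b).length ≤ H) (t : ℕ) :
    ∃ t' ≤ p.length + (H + 1) * t, (M.appendFlatMap h p).run x t' =
      liftCfg (M.run x t) ⟨[], nil_mem_pending⟩ (p ++ (M.run x t).out.flatMap h) := by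
  induction t with
  | zero =>
    refine ⟨p.length, by omega, ?_⟩
    refine (iterate_step_liftCfg x M.init (Nat.zero_le _) p self_mem_pending []).trans ?_
    simp [run_zero, init]
  | succ t ih =>
    obtain ⟨t', ht', heq⟩ := ih
    by_cases hc : (M.run x t).st ∈ M.qhalt
    · refine ⟨t', by nlinarith, ?_⟩
      rw [heq, run_succ, step_of_mem_qhalt M x hc]
    set u := M.δ (M.run x t).st (inAt x (M.run x t).ip) ((M.run x t).w (M.run x t).wp)
    set w := u.out.toList.flatMap h
    have hw : w.length ≤ H := by
      rcases hu : u.out with _ | b <;> simp [w, hu, hH]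
    refine ⟨t' + 1 + w.length, by nlinarith, ?_⟩
    rw [run_add, run_succ, heq, step_liftCfg_nil x _ hc, ← run_succ,
      iterate_step_liftCfg x _ (ip_run_le M x (t + 1)), run_succ,
      out_step_of_notMem_qhalt M x hc]
    simp [w, u]

theorem exists_run_appendFlatMap_eq_liftCfg (t' : ℕ) :
    ∃ t w o, (M.appendFlatMap h p).run x t' = liftCfg (M.run x t) w o := by
  induction t' with
  | zero => exact ⟨0, ⟨p, self_mem_pending⟩, [], rfl⟩
  | succ t' ih =>
    obtain ⟨t, ⟨w, hw⟩, o, heq⟩ := ih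
    rw [run_succ, heq]
    cases w with
    | cons a w =>
      exact ⟨t, _, _, step_liftCfg_cons x _ (ip_run_le M x t) hw o⟩
    | nil =>
      by_cases hc : (M.run x t).st ∈ M.qhalt
      · exact ⟨t, _, _,
          step_of_mem_qhalt _ x ((liftCfg_mem_qhalt_iff _ _ _).mpr ⟨hc, rfl⟩)⟩
      · exact ⟨t + 1, _, _, (step_liftCfg_nil x _ hc o).trans (by rw [run_succ])⟩

variable (h p)

theorem computes_appendFlatMap {f : List α → List β} (hf : M.Computes f) :
    (M.appendFlatMap h p).Computes fun x => p ++ (f x).flatMap h := by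
  intro x
  obtain ⟨t, hc, hout⟩ := hf x
  obtain ⟨H, hH⟩ := Finite.exists_le fun b => (h b).length
  obtain ⟨t', -, heq⟩ := exists_run_appendFlatMap_eq x hH t
  refine ⟨t', ?_, ?_⟩ <;> rw [heq]
  · exact (liftCfg_mem_qhalt_iff _ _ _).mpr ⟨hc, rfl⟩
  · simp [liftCfg, hout]

theorem polyTime_appendFlatMap (hM : M.PolyTime) : (M.appendFlatMap h p).PolyTime := by
  obtain ⟨c, hc⟩ := hM
  obtain ⟨H, hH⟩ := Finite.exists_le fun b => (h b).length
  refine (M.appendFlatMap h p).polyTime_of_le (A := p.length) (B := H + 1) (c := c)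
    fun x => ?_
  obtain ⟨t, ht, hhalt⟩ := hc x
  obtain ⟨t', ht', heq⟩ := exists_run_appendFlatMap_eq x hH t
  refine ⟨t', ht'.trans (by gcongr), ?_⟩
  rw [heq]
  exact (liftCfg_mem_qhalt_iff _ _ _).mpr ⟨hhalt, rfl⟩

theorem logSpace_appendFlatMap (hM : M.LogSpace) : (M.appendFlatMap h p).LogSpace := by
  obtain ⟨c, hc⟩ := hM
  refine ⟨c, fun x t' => ?_⟩
  obtain ⟨t, w, o, heq⟩ := exists_run_appendFlatMap_eq_liftCfg (h := h) (p := p) x t'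
  rw [heq]
  exact hc x t

end AppendFlatMap

end TransTM

theorem inFL_id {α : Type} : InFL (id : List α → List α) := by
  refine ⟨TransTM.copy α, fun x => ⟨x.length + 2, ?_⟩,
    ⟨2, fun x => ⟨x.length + 2, ?_, ?_⟩⟩, ⟨1, fun x t => ?_⟩⟩
  · exact TransTM.run_copy_length_add_two x
  · have := Nat.le_self_pow two_ne_zero x.length
    omega
  · exact (TransTM.run_copy_length_add_two x).1
  · rw [TransTM.run_wp_copy]
    omega

theorem InFL.append_flatMap {α β γ : Type} [Finite β] {f : List α → List β} (hf : InFL f)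
    (h : β → List γ) (p : List γ) : InFL fun x => p ++ (f x).flatMap h :=
  let ⟨M, hc, ht, hs⟩ := hf
  ⟨M.appendFlatMap h p, M.computes_appendFlatMap h p hc, M.polyTime_appendFlatMap h p ht,
    M.logSpace_appendFlatMap h p hs⟩

theorem kSDA_subset_LOGkSDA (k a : ℕ) : kSDA k (Fin a) ⊆ LOGkSDA k (Fin a) :=
  fun L hL => ⟨a, L, hL, id, inFL_id, fun _ => Iff.rfl⟩

theorem lmRed_MEMB_encode_of_mem_LOGkSDA {k a : ℕ} {L : Language (Fin a)}
    (hL : L ∈ LOGkSDA k (Fin a)) : LmRed L (MEMB k (encode k)) := by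
  obtain ⟨m, B, ⟨M, hwf, hds, hrec⟩, f, hf, hred⟩ := hL
  refine ⟨fun x => encode k m M (f x), ?_, fun x => ?_⟩
  · simpa [encode, List.flatMap_map] using
      hf.append_flatMap (fun v => unaryCode v) (unaryCode (machineIndex k ⟨m, M⟩))
  · rw [hred, (hrec (f x)).1, (encode_injective k).mem_MEMB_iff hwf hds]

end SDAP

open SDAP in
theorem MEMB_hard_general (k : ℕ) :
    ∃ enc : (a : ℕ) → SDA k (Fin a) → List (Fin a) → List Bool,
      EncInjective enc ∧
      (∀ (a : ℕ) (L : Language (Fin a)), L ∈ kSDA k (Fin a) → LmRed L (MEMB k enc)) ∧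
      (∀ (a : ℕ) (L : Language (Fin a)), L ∈ LOGkSDA k (Fin a) → LmRed L (MEMB k enc)) :=
  ⟨encode k, encode_injective k,
    fun a _ hL => lmRed_MEMB_encode_of_mem_LOGkSDA (kSDA_subset_LOGkSDA k a hL),
    fun _ _ => lmRed_MEMB_encode_of_mem_LOGkSDA⟩

open SDAP in
/-- For every `k ≥ 2`, `MEMB_k` is hard for `kSDA` under
logarithmic-space many-one reductions, and hence hard for `LOGkSDA`. -/
theorem MEMB_hard (k : ℕ) (hk : 2 ≤ k) :
    ∃ enc : (a : ℕ) → SDA k (Fin a) → List (Fin a) → List Bool,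
      EncInjective enc ∧
      (∀ (a : ℕ) (L : Language (Fin a)), L ∈ kSDA k (Fin a) → LmRed L (MEMB k enc)) ∧
      (∀ (a : ℕ) (L : Language (Fin a)), L ∈ LOGkSDA k (Fin a) → LmRed L (MEMB k enc)) :=
  MEMB_hard_general k
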